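/- For any two forests F and F' on a finite set X, there exists a cherry picking sequence σ for F and F' of length m for some m ≥ |X|. -/

import Mathlib

open scoped Classical

/-- A finite loopless multigraph on an ambient vertex type `V`:
a finite vertex set together with an edge-multiplicity function on unordered pairs. -/
structure Multigraph (V : Type*) where
  verts : Finset V
  edges : Sym2 V → ℕ
  loopless : ∀ v : V, edges s(v, v) = 0
  edge_support : ∀ u v : V, edges s(u, v) ≠ 0 → u ∈ verts

namespace Multigraph

variable {V : Type*} [DecidableEq V]

/-- The degree of a vertex (counting edge multiplicities). -/
def degree (G : Multigraph V) (v : V) : ℕ :=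
  ∑ u ∈ G.verts, G.edges s(v, u)

/-- The number of edges of `G` (counted with multiplicity); by the handshake lemma. -/
def edgeCount (G : Multigraph V) : ℕ :=
  (∑ v ∈ G.verts, G.degree v) / 2

/-- The reticulation number `r(G) = |E| - (|V| - 1)` (cyclomatic number). -/
def reticulation (G : Multigraph V) : ℕ :=
  G.edgeCount + 1 - G.verts.card

def Adj (G : Multigraph V) (u v : V) : Prop := G.edges s(u, v) ≠ 0

def Reach (G : Multigraph V) : V → V → Prop := Relation.ReflTransGen G.Adj

def Connected (G : Multigraph V) : Prop :=
  G.verts.Nonempty ∧ ∀ u ∈ G.verts, ∀ v ∈ G.verts, G.Reach u v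

/-- A simple graph: no multi-edges. -/
def IsSimple (G : Multigraph V) : Prop := ∀ e, G.edges e ≤ 1

/-- A leaf is a vertex of degree at most one. -/
def IsLeaf (G : Multigraph V) (v : V) : Prop := v ∈ G.verts ∧ G.degree v ≤ 1

def leafSet (G : Multigraph V) : Set V := {v | G.IsLeaf v}

/-- A finite graph is acyclic iff every nonempty (induced) subgraph has a
vertex of degree at most one within it. -/
def Acyclic (G : Multigraph V) : Prop :=
  ∀ S ⊆ G.verts, S.Nonempty → ∃ v ∈ S, (∑ u ∈ S, G.edges s(v, u)) ≤ 1

/-- An (unrooted binary) phylogenetic network on `X`: a simple connected graph whose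
leaf set is `X` and in which every non-leaf vertex has degree three. -/
def IsPhyloNetwork (G : Multigraph V) (X : Finset V) : Prop :=
  G.IsSimple ∧ G.Connected ∧ G.leafSet = ↑X ∧
    ∀ v ∈ G.verts, G.degree v ≤ 1 ∨ G.degree v = 3

/-- A phylogenetic tree on `X`: a phylogenetic network on `X` with no cycles. -/
def IsPhyloTree (G : Multigraph V) (X : Finset V) : Prop :=
  G.IsPhyloNetwork X ∧ G.Acyclic

/-- A forest on `X`, regarded as a single graph whose connected components are
the phylogenetic trees of the forest: simple, acyclic, leaf set `X`, all
internal vertices of degree three. -/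
def IsForest (G : Multigraph V) (X : Finset V) : Prop :=
  G.IsSimple ∧ G.Acyclic ∧ G.leafSet = ↑X ∧
    ∀ v ∈ G.verts, G.degree v ≤ 1 ∨ G.degree v = 3

/-- A pseudo-network on `X`: like a phylogenetic network but multi-edges
(of multiplicity exactly two) are allowed. -/
def IsPseudoNetwork (G : Multigraph V) (X : Finset V) : Prop :=
  (∀ e, G.edges e ≤ 2) ∧ G.Connected ∧ G.leafSet = ↑X ∧
    ∀ v ∈ G.verts, G.degree v ≤ 1 ∨ G.degree v = 3

def HasMultiEdge (G : Multigraph V) : Prop := ∃ e, 2 ≤ G.edges e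

def UniqueMultiEdge (G : Multigraph V) : Prop := ∃! e, 2 ≤ G.edges e

def IsSubgraph (H G : Multigraph V) : Prop :=
  H.verts ⊆ G.verts ∧ ∀ e, H.edges e ≤ G.edges e

/-- `G'` is obtained from `G` by subdividing one copy of the edge `{u,v}`
with the new vertex `w`. -/
def SubdividedAt (G : Multigraph V) (u v w : V) (G' : Multigraph V) : Prop :=
  G.edges s(u, v) ≠ 0 ∧ w ∉ G.verts ∧
    G'.verts = insert w G.verts ∧
    ∀ e, G'.edges e =
      (if e = s(u, v) then G.edges e - 1 else G.edges e) +
      (if e = s(u, w) ∨ e = s(w, v) then 1 else 0)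

def SubdivideStep (G G' : Multigraph V) : Prop :=
  ∃ u v w, SubdividedAt G u v w G'

/-- `H` is a subdivision of `T`. -/
def IsSubdivisionOf (H T : Multigraph V) : Prop :=
  Relation.ReflTransGen SubdivideStep T H

/-- `N` displays the tree/forest `F`: some subgraph of `N` is a subdivision of `F`
(for a forest, such a subgraph consists of pairwise vertex-disjoint images of the
trees of the forest). -/
def Displays (N F : Multigraph V) : Prop :=
  ∃ H, IsSubgraph H N ∧ IsSubdivisionOf H F

/-- the list of unordered pairs of consecutive entries of a list. -/
def listEdges : List V → List (Sym2 V)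
  | [] => []
  | [_] => []
  | a :: b :: t => s(a, b) :: listEdges (b :: t)

def IsPathList (G : Multigraph V) (l : List V) (a b : V) : Prop :=
  l.Chain' G.Adj ∧ l.Nodup ∧ l.head? = some a ∧ l.getLast? = some b

/-- In an image `H` (a subdivision of `F` inside a network), the edge `e` of `H`
lies in the image of the edge `{a,b}` of `F`:
`e` lies on a path in `H` from `a` to `b` all of whose internal vertices are
subdivision vertices (not vertices of `F`). -/
def EdgeInImage (F H : Multigraph V) (a b : V) (e : Sym2 V) : Prop :=
  ∃ l : List V, IsPathList H l a b ∧
    (∀ v ∈ l, v = a ∨ v = b ∨ v ∉ F.verts) ∧ e ∈ listEdges l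

def ReachAvoidingEdge (G : Multigraph V) (f : Sym2 V) : V → V → Prop :=
  Relation.ReflTransGen (fun p q => G.edges s(p, q) ≠ 0 ∧ s(p, q) ≠ f)

/-- `{u,v}` is a cut-edge: it is a (simple) edge whose deletion disconnects the graph. -/
def IsCutEdge (G : Multigraph V) (u v : V) : Prop :=
  G.edges s(u, v) = 1 ∧ ¬ G.ReachAvoidingEdge s(u, v) u v

/-- A cut-edge is trivial if it contains a vertex of degree one. -/
def IsTrivialCutEdge (G : Multigraph V) (u v : V) : Prop :=
  G.IsCutEdge u v ∧ (G.degree u ≤ 1 ∨ G.degree v ≤ 1)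

def ReachWithin (G : Multigraph V) (S : Finset V) : V → V → Prop :=
  Relation.ReflTransGen (fun p q => p ∈ S ∧ q ∈ S ∧ G.edges s(p, q) ≠ 0)

def ConnectedOn (G : Multigraph V) (S : Finset V) : Prop :=
  S.Nonempty ∧ ∀ a ∈ S, ∀ b ∈ S, G.ReachWithin S a b

/-- 2-connected: removing any vertex leaves a connected graph. -/
def TwoConnected (G : Multigraph V) : Prop :=
  G.Connected ∧ ∀ v ∈ G.verts, G.ConnectedOn (G.verts.erase v)

def IsSingleEdgeGraph (G : Multigraph V) : Prop :=
  ∃ u v, u ≠ v ∧ G.verts = {u, v} ∧ G.edgeCount = 1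

/-- A blob of `N`: a maximal 2-connected subgraph of `N` that is not an edge. -/
def IsBlob (N B : Multigraph V) : Prop :=
  IsSubgraph B N ∧ B.TwoConnected ∧ ¬ B.IsSingleEdgeGraph ∧
    ∀ B', IsSubgraph B' N → B'.TwoConnected → IsSubgraph B B' → B' = B

/-- The edge `{u,v}` of `N` is incident with the blob `B`:
exactly one endpoint lies in `B`. -/
def EdgeIncidentBlob (N B : Multigraph V) (u v : V) : Prop :=
  N.edges s(u, v) ≠ 0 ∧ ((u ∈ B.verts ∧ v ∉ B.verts) ∨ (v ∈ B.verts ∧ u ∉ B.verts))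

/-- `L(B)`: the set of leaves of `N` incident with the blob `B`. -/
def blobLeaves (N B : Multigraph V) : Set V :=
  {x | N.IsLeaf x ∧ x ∉ B.verts ∧ ∃ u ∈ B.verts, N.edges s(x, u) ≠ 0}

/-- A pendant blob: among the edges of `N` incident with `B`, at most one is a
non-trivial cut-edge and all the others contain a leaf. -/
def IsPendantBlob (N B : Multigraph V) : Prop :=
  IsBlob N B ∧
  (∀ u v, EdgeIncidentBlob N B u v →
      (N.IsLeaf u ∨ N.IsLeaf v) ∨ (N.IsCutEdge u v ∧ ¬ N.IsTrivialCutEdge u v)) ∧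
  (∀ u v u' v', EdgeIncidentBlob N B u v → EdgeIncidentBlob N B u' v' →
      N.IsCutEdge u v → ¬ N.IsTrivialCutEdge u v →
      N.IsCutEdge u' v' → ¬ N.IsTrivialCutEdge u' v' → s(u, v) = s(u', v'))

def IsIsolated (G : Multigraph V) (x : V) : Prop := x ∈ G.verts ∧ G.degree x = 0

/-- Remove an isolated vertex. -/
def RemovedIsolated (G : Multigraph V) (x : V) (G' : Multigraph V) : Prop :=
  G.IsIsolated x ∧ G'.verts = G.verts.erase x ∧ ∀ e, G'.edges e = G.edges e

/-- Suppress a degree-two vertex `w` with two distinct neighbours `a,b`: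
remove `w` and join `a` and `b` by a new edge. -/
def SuppressedVertex (G : Multigraph V) (w : V) (G' : Multigraph V) : Prop :=
  ∃ a b, a ≠ b ∧ G.edges s(w, a) ≠ 0 ∧ G.edges s(w, b) ≠ 0 ∧ G.degree w = 2 ∧
    G'.verts = G.verts.erase w ∧
    ∀ e, G'.edges e =
      if e = s(a, b) then G.edges s(a, b) + 1
      else if w ∈ e then 0 else G.edges e

def MaybeSuppressed (G : Multigraph V) (w : V) (G' : Multigraph V) : Prop :=
  (G.degree w ≠ 2 ∧ G' = G) ∨ SuppressedVertex G w G'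

/-- Delete one copy of the edge `{u,v}` (no suppression). -/
def DeletedEdge (G : Multigraph V) (u v : V) (G' : Multigraph V) : Prop :=
  G.edges s(u, v) ≠ 0 ∧ G'.verts = G.verts ∧
    ∀ e, G'.edges e = if e = s(u, v) then G.edges e - 1 else G.edges e

/-- `G' = G − e` for the edge `e = {u,v}`: delete the edge and suppress any
resulting degree-two vertices. -/
def RemovedEdge (G : Multigraph V) (u v : V) (G' : Multigraph V) : Prop :=
  ∃ G₁ G₂, DeletedEdge G u v G₁ ∧ MaybeSuppressed G₁ u G₂ ∧ MaybeSuppressed G₂ v G'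

/-- `G' = G − x` for a leaf `x`: delete `x` (and its pendant edge, if any)
and suppress the resulting degree-two vertex (if any). -/
def RemovedLeaf (G : Multigraph V) (x : V) (G' : Multigraph V) : Prop :=
  RemovedIsolated G x G' ∨
  (∃ u G₁ G₂, G.degree x = 1 ∧ G.edges s(x, u) ≠ 0 ∧
     DeletedEdge G x u G₁ ∧ RemovedIsolated G₁ x G₂ ∧ MaybeSuppressed G₂ u G')

/-- `G' = G − e_z` : removal of the pendant edge of the leaf `z`. -/
def RemovedPendant (G : Multigraph V) (z : V) (G' : Multigraph V) : Prop :=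
  ∃ u, G.degree z = 1 ∧ G.edges s(z, u) ≠ 0 ∧ RemovedEdge G z u G'

/-- A cherry `(x,y)`: two distinct leaves adjacent to a common vertex, or whose
tree is the single edge `{x,y}`. -/
def IsCherry (G : Multigraph V) (x y : V) : Prop :=
  x ≠ y ∧ G.IsLeaf x ∧ G.IsLeaf y ∧
    ((∃ v, G.edges s(x, v) ≠ 0 ∧ G.edges s(y, v) ≠ 0) ∨ G.edges s(x, y) ≠ 0)

def InACherry (G : Multigraph V) (x : V) : Prop := ∃ w, G.IsCherry x w

def ReachAvoidingVertex (G : Multigraph V) (u : V) : V → V → Prop :=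
  Relation.ReflTransGen (fun p q => p ≠ u ∧ q ≠ u ∧ G.edges s(p, q) ≠ 0)

/-- `((x,y),p)` is a proper pendant subtree: `a` is adjacent to the leaves `x,y`;
`b` is adjacent to `a` and to the leaf `p`; the cut-edge `{b,c}` attaches this
subtree to the rest of its tree.  Then `e_p = {p,b}` and `e_{((x,y),p)} = {b,c}`. -/
def PendantCherryTriple (G : Multigraph V) (x y p a b c : V) : Prop :=
  G.IsLeaf x ∧ G.IsLeaf y ∧ G.IsLeaf p ∧
  x ≠ y ∧ x ≠ p ∧ y ≠ p ∧ a ≠ b ∧ c ≠ a ∧ c ≠ p ∧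
  G.edges s(x, a) ≠ 0 ∧ G.edges s(y, a) ≠ 0 ∧ G.edges s(a, b) ≠ 0 ∧
  G.edges s(p, b) ≠ 0 ∧ G.edges s(b, c) ≠ 0

/-- `((x,y),(p,q))` is a proper pendant subtree: `a` is adjacent to leaves `x,y`;
`d` is adjacent to leaves `p,q`; `b` is adjacent to `a`, `d` and (via the cut-edge)
to `c`.  Then `e_p = {p,d}`, `e_q = {q,d}` and `e_{(p,q)} = {d,b}`. -/
def PendantDoubleCherry (G : Multigraph V) (x y p q a d b c : V) : Prop :=
  G.IsLeaf x ∧ G.IsLeaf y ∧ G.IsLeaf p ∧ G.IsLeaf q ∧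
  x ≠ y ∧ p ≠ q ∧ x ≠ p ∧ x ≠ q ∧ y ≠ p ∧ y ≠ q ∧ a ≠ d ∧ c ≠ a ∧ c ≠ d ∧
  G.edges s(x, a) ≠ 0 ∧ G.edges s(y, a) ≠ 0 ∧
  G.edges s(p, d) ≠ 0 ∧ G.edges s(q, d) ≠ 0 ∧
  G.edges s(a, b) ≠ 0 ∧ G.edges s(d, b) ≠ 0 ∧ G.edges s(b, c) ≠ 0

/-- Case (C2)(a) of a cherry picking sequence. -/
def CaseC2a (F F' Fn Fn' : Multigraph V) (x y : V) : Prop :=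
  ∃ z, z ≠ y ∧ F'.IsCherry x z ∧ Fn' = F' ∧
    (RemovedPendant F x Fn ∨ RemovedPendant F y Fn ∨
     (∃ p a b c, PendantCherryTriple F x y p a b c ∧
        (RemovedEdge F p b Fn ∨ RemovedEdge F b c Fn)) ∨
     (∃ p q a d b c, PendantDoubleCherry F x y p q a d b c ∧
        (RemovedEdge F p d Fn ∨ RemovedEdge F q d Fn ∨ RemovedEdge F d b Fn)))

/-- Case (C2)(b) of a cherry picking sequence. -/
def CaseC2b (F F' Fn Fn' : Multigraph V) (x y : V) : Prop :=
  F'.Reach x y ∧ ¬ F'.InACherry x ∧ ¬ F'.InACherry y ∧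
    ((Fn' = F' ∧ (RemovedPendant F x Fn ∨ RemovedPendant F y Fn)) ∨
     (Fn = F ∧ ∃ u w, F'.edges s(x, u) ≠ 0 ∧ F'.edges s(u, w) ≠ 0 ∧ w ≠ x ∧
        ¬ F'.ReachAvoidingVertex u w y ∧ RemovedEdge F' u w Fn'))

/-- Case (C2)(c) of a cherry picking sequence. -/
def CaseC2c (F F' Fn Fn' : Multigraph V) (x y : V) : Prop :=
  ¬ F'.Reach x y ∧ ¬ F'.IsIsolated x ∧ ¬ F'.IsIsolated y ∧
    ¬ F'.InACherry x ∧ ¬ F'.InACherry y ∧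
    Fn' = F' ∧ (RemovedPendant F x Fn ∨ RemovedPendant F y Fn)

def C2half (F F' Fn Fn' : Multigraph V) (x : V) : Prop :=
  ∃ y, F.IsCherry x y ∧
    (CaseC2a F F' Fn Fn' x y ∨ CaseC2b F F' Fn Fn' x y ∨ CaseC2c F F' Fn Fn' x y)

/-- Case (C1): `(x,y)` is a cherry of both forests, and `x` is removed from both. -/
def CaseC1 (F F' Fn Fn' : Multigraph V) (x : V) : Prop :=
  ∃ y, F.IsCherry x y ∧ F'.IsCherry x y ∧ RemovedLeaf F x Fn ∧ RemovedLeaf F' x Fn'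

/-- Case (C2), including the variant with the roles of the two forests reversed. -/
def CaseC2 (F F' Fn Fn' : Multigraph V) (x : V) : Prop :=
  C2half F F' Fn Fn' x ∨ C2half F' F Fn' Fn x

/-- Case (C3): `x` is a single-vertex component of one of the forests,
and `x` is removed from both. -/
def CaseC3 (F F' Fn Fn' : Multigraph V) (x : V) : Prop :=
  (F.IsIsolated x ∨ F'.IsIsolated x) ∧ RemovedLeaf F x Fn ∧ RemovedLeaf F' x Fn'

/-- One step of a cherry picking sequence: precisely one of the cases
(C1), (C2), (C3) holds. -/
def CPStep (F F' Fn Fn' : Multigraph V) (x : V) : Prop :=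
  (CaseC1 F F' Fn Fn' x ∧ ¬ CaseC2 F F' Fn Fn' x ∧ ¬ CaseC3 F F' Fn Fn' x) ∨
  (¬ CaseC1 F F' Fn Fn' x ∧ CaseC2 F F' Fn Fn' x ∧ ¬ CaseC3 F F' Fn Fn' x) ∨
  (¬ CaseC1 F F' Fn Fn' x ∧ ¬ CaseC2 F F' Fn Fn' x ∧ CaseC3 F F' Fn Fn' x)

def IsSingleVertexGraph (G : Multigraph V) (x : V) : Prop :=
  G.verts = {x} ∧ ∀ e, G.edges e = 0

/-- `(xs 0, xs 1, …, xs (m-1))`, together with the interpolating forests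
`Fs i`, `Fs' i`, is a cherry picking sequence (of length `m`) for `F` and `F'`. -/
def IsCPS (X : Finset V) (F F' : Multigraph V) (m : ℕ) (xs : ℕ → V)
    (Fs Fs' : ℕ → Multigraph V) : Prop :=
  1 ≤ m ∧ X.card ≤ m ∧ (∀ i < m, xs i ∈ X) ∧
  Fs 0 = F ∧ Fs' 0 = F' ∧
  IsSingleVertexGraph (Fs (m - 1)) (xs (m - 1)) ∧
  IsSingleVertexGraph (Fs' (m - 1)) (xs (m - 1)) ∧
  ∀ i, i + 1 < m → CPStep (Fs i) (Fs' i) (Fs (i + 1)) (Fs' (i + 1)) (xs i)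

/-- The weight of a cherry picking sequence: the number of indices at which a
(C2)-reduction is applied. -/
noncomputable def cpsWeight (m : ℕ) (xs : ℕ → V) (Fs Fs' : ℕ → Multigraph V) : ℕ :=
  ((Finset.range (m - 1)).filter fun i =>
    CaseC2 (Fs i) (Fs' i) (Fs (i + 1)) (Fs' (i + 1)) (xs i)).card

/-- The minimum weight of a cherry picking sequence for `F` and `F'`. -/
noncomputable def minCPSWeight (X : Finset V) (F F' : Multigraph V) : ℕ :=
  sInf {k | ∃ m xs Fs Fs', IsCPS X F F' m xs Fs Fs' ∧ cpsWeight m xs Fs Fs' = k}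

/-- The hybrid number of two forests on `X`. -/
noncomputable def hybridNumber (X : Finset V) (F F' : Multigraph V) : ℕ :=
  sInf {k | ∃ N : Multigraph V, N.IsPhyloNetwork X ∧ Displays N F ∧ Displays N F' ∧
    N.reticulation = k}

/-- Add one new edge `{p,q}`. -/
def AddedEdge (G : Multigraph V) (p q : V) (G' : Multigraph V) : Prop :=
  p ≠ q ∧ G'.verts = G.verts ∧
    ∀ e, G'.edges e = if e = s(p, q) then G.edges e + 1 else G.edges e

/-- Preparing an attachment point for a TBR reconnection: either the component is a
single vertex `p` (attach there directly), or a new vertex `p` subdivides an edge. -/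
def AttachPoint (G : Multigraph V) (p : V) (G' : Multigraph V) : Prop :=
  (G.IsIsolated p ∧ G' = G) ∨ (∃ a b, SubdividedAt G a b p G')

/-- A single tree bisection and reconnection (TBR) move: delete an edge, suppress any
resulting degree-two vertices, and reconnect the two resulting trees by a new edge
between a (subdivided) edge of each. -/
def TBRStep (T T' : Multigraph V) : Prop :=
  ∃ u v G G₁ G₂ p q, RemovedEdge T u v G ∧
    AttachPoint G p G₁ ∧ AttachPoint G₁ q G₂ ∧
    ¬ G₂.Reach p q ∧ AddedEdge G₂ p q T'

/-- Isomorphism of leaf-labelled graphs fixing the labels in `X`. -/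
def IsoFixing (G G' : Multigraph V) (X : Finset V) : Prop :=
  ∃ φ : V ≃ V, (∀ x ∈ X, φ x = x) ∧ G.verts.image φ = G'.verts ∧
    ∀ u v : V, G'.edges s(φ u, φ v) = G.edges s(u, v)

/-- The TBR distance between two phylogenetic trees on `X`. -/
noncomputable def tbrDist (X : Finset V) (T T' : Multigraph V) : ℕ :=
  sInf {n | ∃ f : ℕ → Multigraph V, f 0 = T ∧ IsoFixing (f n) T' X ∧
    ∀ i < n, TBRStep (f i) (f (i + 1))}

/-- Suppress a multi-edge `{u,v}` (replace the two parallel edges by one edge) and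
suppress the resulting degree-two vertices `u` and `v`: the other neighbours
`p` of `u` and `q` of `v` get joined by a new edge. -/
def SuppressedMultiEdge (N N' : Multigraph V) : Prop :=
  ∃ u v p q, N.edges s(u, v) = 2 ∧ p ≠ q ∧ p ≠ v ∧ q ≠ u ∧
    N.edges s(u, p) ≠ 0 ∧ N.edges s(v, q) ≠ 0 ∧
    N'.verts = (N.verts.erase u).erase v ∧
    ∀ e, N'.edges e =
      if e = s(p, q) then N.edges s(p, q) + 1
      else if u ∈ e ∨ v ∈ e then 0 else N.edges e

/-- A simplification sequence `N = N_1, …, N_k` (indexed here by `0,…,k-1`):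
distinct pseudo-networks on `X`, each obtained from the previous by suppressing a
multi-edge, ending in a phylogenetic network. -/
def IsSimplificationSeq (N : Multigraph V) (X : Finset V) (k : ℕ)
    (Ns : ℕ → Multigraph V) : Prop :=
  2 ≤ k ∧ Ns 0 = N ∧ (∀ i < k, (Ns i).IsPseudoNetwork X) ∧
  (∀ i j, i < k → j < k → i ≠ j → Ns i ≠ Ns j) ∧
  (∀ i, i + 1 < k → SuppressedMultiEdge (Ns i) (Ns (i + 1))) ∧
  ¬ (Ns (k - 1)).HasMultiEdge

/-- `M = N − B` for a pendant blob `B` with `|L(B)| ≤ 1`, following the definition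
in the paper (two cases, according to whether `L(B)` is empty or a singleton). -/
def RemovedBlob (N B M : Multigraph V) : Prop :=
  (blobLeaves N B = ∅ ∧ ∃ u v w w',
      N.IsCutEdge u v ∧ v ∈ B.verts ∧ u ∉ B.verts ∧
      w ≠ w' ∧ w ∉ B.verts ∧ w' ∉ B.verts ∧ w ≠ u ∧ w' ≠ u ∧
      N.edges s(u, w) ≠ 0 ∧ N.edges s(u, w') ≠ 0 ∧
      ((N.edges s(w, w') = 0 ∧
          M.verts = (N.verts \ B.verts).erase u ∧
          ∀ e, M.edges e =
            if e = s(w, w') then 1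
            else if u ∈ e ∨ ∃ z ∈ B.verts, z ∈ e then 0
            else N.edges e) ∨
       (N.edges s(w, w') ≠ 0 ∧ ∃ u', u' ∉ N.verts ∧
          M.verts = insert u' (N.verts \ B.verts) ∧
          ∀ e, M.edges e =
            if e = s(w, w') then 0
            else if e = s(w, u') ∨ e = s(w', u') ∨ e = s(u, u') then 1
            else if ∃ z ∈ B.verts, z ∈ e then 0
            else N.edges e))) ∨
  (∃ x, blobLeaves N B = {x} ∧
    ((N.verts = B.verts ∪ {x} ∧ M.verts = {x} ∧ ∀ e, M.edges e = 0) ∨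
     (∃ u v, N.IsCutEdge u v ∧ v ∈ B.verts ∧ u ∉ B.verts ∧ u ≠ x ∧
        M.verts = N.verts \ B.verts ∧
        ∀ e, M.edges e =
          if e = s(x, u) then 1
          else if ∃ z ∈ B.verts, z ∈ e then 0
          else N.edges e)))

end Multigraph

/-!
Induction on `|X|` and, for fixed `X`, on the total degree of the two forests. A leaf that is an
isolated vertex of either forest is removed from both (C3). Otherwise acyclicity yields an internal
vertex of `F` with at most one internal neighbour, hence a cherry `(x, y)` of `F`. If it is also a
cherry of `F'`, `x` is removed from both (C1); if not, the pendant edge of `x` (or of `y`) is cut in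
`F` (C2), which lowers the degree sum. Cutting a pendant edge keeps a forest because suppressing the
resulting degree-two vertex `w` with neighbours `a, b` leaves all other degrees unchanged and
preserves acyclicity: the new edge `{a, b}` takes the place of the path `a - w - b`.
-/

namespace Multigraph

variable {V : Type*} {F F' Fn Fn' G G' G₁ G₂ H : Multigraph V} {Y Y' : Finset V}
  {a b u v w x y : V}

def degreeSum (G : Multigraph V) : ℕ := ∑ v ∈ G.verts, G.degree v

lemma edges_comm (G : Multigraph V) (u v : V) : G.edges s(u, v) = G.edges s(v, u) := by
  rw [Sym2.eq_swap]

lemma mem_verts_of_edges_ne_zero (h : G.edges s(u, v) ≠ 0) : u ∈ G.verts :=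
  G.edge_support u v h

lemma mem_verts_of_edges_ne_zero' (h : G.edges s(u, v) ≠ 0) : v ∈ G.verts :=
  G.edge_support v u (by rwa [edges_comm])

lemma ne_of_edges_ne_zero (h : G.edges s(u, v) ≠ 0) : u ≠ v := by
  rintro rfl
  exact h (G.loopless u)

lemma sum_edges_le_degree {S : Finset V} (hS : S ⊆ G.verts) :
    ∑ w ∈ S, G.edges s(v, w) ≤ G.degree v :=
  Finset.sum_le_sum_of_subset hS

lemma edges_le_degree (h : w ∈ G.verts) : G.edges s(v, w) ≤ G.degree v := by
  simpa using sum_edges_le_degree (G := G) (v := v) (Finset.singleton_subset_iff.mpr h)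

lemma exists_edges_ne_zero_of_degree_ne_zero (h : G.degree v ≠ 0) :
    ∃ w, G.edges s(v, w) ≠ 0 := by
  obtain ⟨w, -, hw⟩ := Finset.exists_ne_zero_of_sum_ne_zero h
  exact ⟨w, hw⟩

lemma exists_ne_of_two_le_sum {S : Finset V} {f : V → ℕ} (hf : ∀ v, f v ≤ 1)
    (h : 2 ≤ ∑ v ∈ S, f v) :
    ∃ a ∈ S, ∃ b ∈ S, a ≠ b ∧ f a ≠ 0 ∧ f b ≠ 0 := by
  have hcard : 1 < (S.filter (f · ≠ 0)).card := by
    rw [← Finset.sum_filter_ne_zero] at h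
    have := h.trans (Finset.sum_le_card_nsmul _ _ 1 fun v _ => hf v)
    simp only [smul_eq_mul, mul_one] at this
    omega
  obtain ⟨a, ha, b, hb, hab⟩ := Finset.one_lt_card.mp hcard
  simp only [Finset.mem_filter] at ha hb
  exact ⟨a, ha.1, b, hb.1, hab, ha.2, hb.2⟩

lemma IsIsolated.edges_eq_zero (h : G.IsIsolated x) (w : V) : G.edges s(x, w) = 0 := by
  by_contra hw
  have := edges_le_degree (v := x) (mem_verts_of_edges_ne_zero' hw)
  have := h.2
  omega

lemma Acyclic.mono (hac : G.Acyclic) (hV : G'.verts ⊆ G.verts)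
    (hE : ∀ e, G'.edges e ≤ G.edges e) : G'.Acyclic := by
  intro S hS hne
  obtain ⟨v, hv, hsum⟩ := hac S (hS.trans hV) hne
  exact ⟨v, hv, (Finset.sum_le_sum fun w _ => hE _).trans hsum⟩

lemma Acyclic.isSimple (hac : G.Acyclic) : G.IsSimple := by
  intro e
  induction e using Sym2.ind with
  | _ p q =>
    by_contra! h
    have hpq0 : G.edges s(p, q) ≠ 0 := by omega
    have hpq := ne_of_edges_ne_zero hpq0
    obtain ⟨v, hv, hsum⟩ := hac {p, q}
      (by simp [Finset.insert_subset_iff, mem_verts_of_edges_ne_zero hpq0,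
        mem_verts_of_edges_ne_zero' hpq0])
      (Finset.insert_nonempty _ _)
    have hsym := edges_comm G p q
    simp only [Finset.mem_insert, Finset.mem_singleton] at hv
    rcases hv with rfl | rfl <;> rw [Finset.sum_pair hpq, G.loopless] at hsum <;> omega

lemma IsCherry.symm (h : G.IsCherry x y) : G.IsCherry y x := by
  obtain ⟨hne, hx, hy, ⟨v, hxv, hyv⟩ | hxy⟩ := h
  · exact ⟨hne.symm, hy, hx, Or.inl ⟨v, hyv, hxv⟩⟩
  · exact ⟨hne.symm, hy, hx, Or.inr (by rwa [edges_comm])⟩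

lemma IsCherry.degree_eq_one (h : G.IsCherry x y) : G.degree x = 1 := by
  obtain ⟨w, hw⟩ : ∃ w, G.edges s(x, w) ≠ 0 := by
    rcases h.2.2.2 with ⟨v, hv, -⟩ | hxy
    exacts [⟨v, hv⟩, ⟨y, hxy⟩]
  have := edges_le_degree (v := x) (mem_verts_of_edges_ne_zero' hw)
  have := h.2.1.2
  omega

lemma IsCherry.not_isIsolated (h : G.IsCherry x y) : ¬ G.IsIsolated x := fun hiso => by
  have := h.degree_eq_one
  have := hiso.2
  omega

namespace IsForest

lemma isLeaf_iff (hG : G.IsForest Y) : G.IsLeaf v ↔ v ∈ Y := by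
  rw [← Finset.mem_coe, ← hG.2.2.1]
  rfl

lemma mem_verts (hG : G.IsForest Y) (hv : v ∈ Y) : v ∈ G.verts :=
  (hG.isLeaf_iff.mpr hv).1

lemma degree_le_one (hG : G.IsForest Y) (hv : v ∈ Y) : G.degree v ≤ 1 :=
  (hG.isLeaf_iff.mpr hv).2

lemma degree_eq_three (hG : G.IsForest Y) (hv : v ∈ G.verts) (hvY : v ∉ Y) : G.degree v = 3 :=
  (hG.2.2.2 v hv).resolve_left fun h => hvY (hG.isLeaf_iff.mp ⟨hv, h⟩)

lemma exists_isCherry (hG : G.IsForest Y) (hY : Y.Nonempty)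
    (hiso : ∀ v ∈ Y, ¬ G.IsIsolated v) : ∃ x ∈ Y, ∃ y ∈ Y, G.IsCherry x y := by
  by_cases hI : (G.verts.filter (· ∉ Y)).Nonempty
  · obtain ⟨v, hvI, hsum⟩ := hG.2.1 _ (Finset.filter_subset _ _) hI
    rw [Finset.mem_filter] at hvI
    have h3 := hG.degree_eq_three hvI.1 hvI.2
    rw [degree, ← Finset.sum_filter_not_add_sum_filter _ (· ∉ Y)] at h3
    simp only [not_not] at h3
    obtain ⟨a, ha, b, hb, hab, hva, hvb⟩ :=
      exists_ne_of_two_le_sum (S := G.verts.filter (· ∈ Y)) (f := fun u => G.edges s(v, u))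
        (fun _ => hG.1 _) (by omega)
    rw [Finset.mem_filter] at ha hb
    refine ⟨a, ha.2, b, hb.2, hab, hG.isLeaf_iff.mpr ha.2, hG.isLeaf_iff.mpr hb.2,
      Or.inl ⟨v, ?_, ?_⟩⟩ <;> rwa [edges_comm]
  · obtain ⟨x, hx⟩ := hY
    have hdeg : G.degree x ≠ 0 := fun h => hiso x hx ⟨hG.mem_verts hx, h⟩
    obtain ⟨u, hu⟩ := exists_edges_ne_zero_of_degree_ne_zero hdeg
    have huY : u ∈ Y := by
      by_contra huY
      exact hI ⟨u, Finset.mem_filter.mpr ⟨mem_verts_of_edges_ne_zero' hu, huY⟩⟩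
    exact ⟨x, hx, u, huY, ne_of_edges_ne_zero hu, hG.isLeaf_iff.mpr hx, hG.isLeaf_iff.mpr huY,
      Or.inr hu⟩

lemma of_degree (hG : G.IsForest Y) (hac : G'.Acyclic) (hV : G'.verts ⊆ G.verts)
    (hdeg : ∀ v ∈ G'.verts, G'.degree v = G.degree v ∨ G.degree v = 1 ∧ G'.degree v = 0)
    (hY' : ∀ v, v ∈ Y' ↔ v ∈ Y ∧ v ∈ G'.verts) : G'.IsForest Y' := by
  have hleaf : ∀ v ∈ G'.verts, G'.degree v ≤ 1 ↔ G.degree v ≤ 1 := by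
    intro v hv
    rcases hdeg v hv with h | h <;> omega
  refine ⟨hac.isSimple, hac, Set.ext fun v => ?_, fun v hv => ?_⟩
  · simp only [leafSet, IsLeaf, Finset.mem_coe, hY']
    constructor
    · rintro ⟨hv, hd⟩
      exact ⟨hG.isLeaf_iff.mp ⟨hV hv, (hleaf v hv).mp hd⟩, hv⟩
    · rintro ⟨hvY, hv⟩
      exact ⟨hv, (hleaf v hv).mpr (hG.degree_le_one hvY)⟩
  · rcases hdeg v hv with h | ⟨-, h⟩
    · rw [h]
      exact hG.2.2.2 v (hV hv)
    · omega

end IsForest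

variable [DecidableEq V]

lemma degree_eq_edges_add (h : w ∈ G.verts) :
    G.degree v = G.edges s(v, w) + ∑ u ∈ G.verts.erase w, G.edges s(v, u) :=
  (Finset.add_sum_erase _ _ h).symm

lemma IsForest.isSingleVertexGraph (hG : G.IsForest {x}) : G.IsSingleVertexGraph x := by
  have hx := hG.mem_verts (Finset.mem_singleton_self x)
  have hverts : G.verts = {x} := by
    refine Finset.eq_singleton_iff_unique_mem.mpr ⟨hx, fun v hv => ?_⟩
    by_contra hvx
    obtain ⟨w, hw, hsum⟩ :=
      hG.2.1 (G.verts.erase x) (Finset.erase_subset _ _) ⟨v, by simp [hv, hvx]⟩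
    rw [Finset.mem_erase] at hw
    have h3 := hG.degree_eq_three hw.2 (by simpa using hw.1)
    rw [degree_eq_edges_add hx] at h3
    have := hG.1 s(w, x)
    omega
  refine ⟨hverts, fun e => ?_⟩
  induction e using Sym2.ind with
  | _ p q =>
    by_contra h
    have hp := mem_verts_of_edges_ne_zero h
    have hq := mem_verts_of_edges_ne_zero' h
    simp only [hverts, Finset.mem_singleton] at hp hq
    exact h (by rw [hp, hq, G.loopless])

lemma exists_deletedEdge (h : G.edges s(u, v) ≠ 0) : ∃ G', DeletedEdge G u v G' :=
  ⟨{ verts := G.verts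
     edges := fun e => if e = s(u, v) then G.edges e - 1 else G.edges e
     loopless := fun p => by simp [G.loopless]
     edge_support := fun p q hpq => G.edge_support p q (by split_ifs at hpq <;> omega) },
    h, rfl, fun _ => rfl⟩

namespace DeletedEdge

lemma symm (h : DeletedEdge G u v G') : DeletedEdge G v u G' := by
  obtain ⟨huv, hV, hE⟩ := h
  exact ⟨by rwa [edges_comm], hV, fun e => by rw [hE, Sym2.eq_swap]⟩

lemma edges_le (h : DeletedEdge G u v G') (e : Sym2 V) : G'.edges e ≤ G.edges e := by
  rw [h.2.2]
  split_ifs <;> omega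

lemma acyclic (h : DeletedEdge G u v G') (hac : G.Acyclic) : G'.Acyclic :=
  hac.mono h.2.1.le h.edges_le

lemma degree_le (h : DeletedEdge G u v G') (w : V) : G'.degree w ≤ G.degree w := by
  rw [degree, degree, h.2.1]
  exact Finset.sum_le_sum fun _ _ => h.edges_le _

lemma degree_of_ne (h : DeletedEdge G u v G') (hu : w ≠ u) (hv : w ≠ v) :
    G'.degree w = G.degree w := by
  rw [degree, degree, h.2.1]
  refine Finset.sum_congr rfl fun z _ => ?_
  rw [h.2.2, if_neg]
  intro hz
  rcases Sym2.eq_iff.mp hz with ⟨hwu, -⟩ | ⟨hwv, -⟩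
  exacts [hu hwu, hv hwv]

lemma degree_add_one (h : DeletedEdge G u v G') : G'.degree u + 1 = G.degree u := by
  have hv := mem_verts_of_edges_ne_zero' h.1
  rw [degree_eq_edges_add hv, degree_eq_edges_add (h.2.1 ▸ hv : v ∈ G'.verts), h.2.2,
    if_pos rfl]
  have hrest : ∑ z ∈ G'.verts.erase v, G'.edges s(u, z) =
      ∑ z ∈ G.verts.erase v, G.edges s(u, z) := by
    rw [h.2.1]
    refine Finset.sum_congr rfl fun z hz => ?_
    rw [h.2.2, if_neg (mt Sym2.congr_right.mp (Finset.ne_of_mem_erase hz))]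
  have := h.1
  omega

end DeletedEdge

lemma exists_removedIsolated (h : G.IsIsolated x) : ∃ G', RemovedIsolated G x G' :=
  ⟨{ verts := G.verts.erase x
     edges := G.edges
     loopless := G.loopless
     edge_support := fun p q hpq => Finset.mem_erase.mpr
       ⟨by rintro rfl; exact hpq (h.edges_eq_zero q), G.edge_support p q hpq⟩ },
    h, rfl, fun _ => rfl⟩

namespace RemovedIsolated

lemma acyclic (h : RemovedIsolated G x G') (hac : G.Acyclic) : G'.Acyclic :=
  hac.mono (h.2.1 ▸ Finset.erase_subset _ _) fun e => (h.2.2 e).le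

lemma degree_eq (h : RemovedIsolated G x G') (v : V) : G'.degree v = G.degree v := by
  simp only [degree, h.2.1, h.2.2]
  exact Finset.sum_erase _ (by rw [edges_comm]; exact h.1.edges_eq_zero v)

end RemovedIsolated

lemma edges_eq_of_degree_eq_two (hab : a ≠ b) (ha : G.edges s(w, a) ≠ 0)
    (hb : G.edges s(w, b) ≠ 0) (h2 : G.degree w = 2) (z : V) :
    G.edges s(w, z) = if z = a ∨ z = b then 1 else 0 := by
  have hA := mem_verts_of_edges_ne_zero' ha
  have hB := mem_verts_of_edges_ne_zero' hb
  have hpair := sum_edges_le_degree (G := G) (v := w) (S := {a, b})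
    (by simp [Finset.insert_subset_iff, hA, hB])
  rw [Finset.sum_pair hab, h2] at hpair
  split_ifs with hz
  · rcases hz with rfl | rfl <;> omega
  · rw [not_or] at hz
    by_contra hz0
    have htriple := sum_edges_le_degree (G := G) (v := w) (S := {z, a, b})
      (by simp [Finset.insert_subset_iff, hA, hB, mem_verts_of_edges_ne_zero' hz0])
    rw [Finset.sum_insert (by simp [hz.1, hz.2]), Finset.sum_pair hab, h2] at htriple
    omega

lemma sum_ite_eq_sym2 (hab : a ≠ b) (v : V) (S : Finset V) :
    ∑ u ∈ S, (if s(v, u) = s(a, b) then 1 else 0) =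
      if v = a ∧ b ∈ S ∨ v = b ∧ a ∈ S then 1 else 0 := by
  by_cases hva : v = a
  · subst hva
    simp [hab]
  by_cases hvb : v = b
  · subst hvb
    simp [Sym2.eq_swap (a := a), hva]
  rw [Finset.sum_eq_zero, if_neg (by tauto)]
  intro u _
  rw [if_neg]
  intro h
  rcases Sym2.eq_iff.mp h with ⟨h1, -⟩ | ⟨h1, -⟩
  exacts [hva h1, hvb h1]

lemma sum_edges_of_suppressed (hab : a ≠ b)
    (hE : ∀ e, G'.edges e =
      if e = s(a, b) then G.edges s(a, b) + 1 else if w ∈ e then 0 else G.edges e)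
    (hv : v ≠ w) {S : Finset V} (hS : w ∉ S) :
    ∑ u ∈ S, G'.edges s(v, u) =
      ∑ u ∈ S, G.edges s(v, u) + if v = a ∧ b ∈ S ∨ v = b ∧ a ∈ S then 1 else 0 := by
  rw [← sum_ite_eq_sym2 hab, ← Finset.sum_add_distrib]
  refine Finset.sum_congr rfl fun u hu => ?_
  rw [hE]
  split_ifs with h1 h2
  · rw [h1]
  · rcases Sym2.mem_iff.mp h2 with rfl | rfl
    exacts [absurd rfl hv, absurd hu hS]
  · rfl

namespace SuppressedVertex

lemma degree_eq (h : SuppressedVertex G w G') (hv : v ≠ w) : G'.degree v = G.degree v := by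
  obtain ⟨a, b, hab, ha, hb, h2, hV, hE⟩ := h
  have hw := mem_verts_of_edges_ne_zero ha
  have haw : a ∈ G.verts.erase w := Finset.mem_erase.mpr
    ⟨(ne_of_edges_ne_zero ha).symm, mem_verts_of_edges_ne_zero' ha⟩
  have hbw : b ∈ G.verts.erase w := Finset.mem_erase.mpr
    ⟨(ne_of_edges_ne_zero hb).symm, mem_verts_of_edges_ne_zero' hb⟩
  rw [degree, hV, sum_edges_of_suppressed hab hE hv (Finset.notMem_erase w _),
    degree_eq_edges_add hw, edges_comm, edges_eq_of_degree_eq_two hab ha hb h2]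
  simp only [haw, hbw, and_true]
  omega

lemma acyclic (h : SuppressedVertex G w G') (hac : G.Acyclic) : G'.Acyclic := by
  obtain ⟨a, b, hab, ha, hb, h2, hV, hE⟩ := h
  have hwab := edges_eq_of_degree_eq_two hab ha hb h2
  intro S hS hne
  rw [hV] at hS
  have hwS : w ∉ S := fun hw => Finset.notMem_erase w _ (hS hw)
  by_cases habS : a ∈ S ∧ b ∈ S
  · obtain ⟨v, hv, hsum⟩ := hac (insert w S)
      (Finset.insert_subset (mem_verts_of_edges_ne_zero ha) (hS.trans (Finset.erase_subset _ _)))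
      (Finset.insert_nonempty _ _)
    have hvw : v ≠ w := by
      rintro rfl
      have hle := (Finset.sum_le_sum_of_subset (f := fun u => G.edges s(v, u))
        (show {a, b} ⊆ insert v S by simp [Finset.insert_subset_iff, habS])).trans hsum
      rw [Finset.sum_pair hab] at hle
      omega
    refine ⟨v, (Finset.mem_insert.mp hv).resolve_left hvw, ?_⟩
    rw [Finset.sum_insert hwS, edges_comm, hwab] at hsum
    rw [sum_edges_of_suppressed hab hE hvw hwS]
    simp only [habS, and_true] at hsum ⊢
    exact hsum.trans_eq' (add_comm _ _)
  · obtain ⟨v, hv, hsum⟩ := hac S (hS.trans (Finset.erase_subset _ _)) hne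
    refine ⟨v, hv, ?_⟩
    have hvw : v ≠ w := fun hvw => hwS (hvw ▸ hv)
    rw [sum_edges_of_suppressed hab hE hvw hwS, if_neg]
    · exact hsum
    · rintro (⟨rfl, hb⟩ | ⟨rfl, ha⟩)
      exacts [habS ⟨hv, hb⟩, habS ⟨ha, hv⟩]

end SuppressedVertex

lemma exists_maybeSuppressed (hs : G.IsSimple) (w : V) : ∃ G', MaybeSuppressed G w G' := by
  by_cases h2 : G.degree w = 2
  swap
  · exact ⟨G, Or.inl ⟨h2, rfl⟩⟩
  obtain ⟨a, -, b, -, hab, ha, hb⟩ :=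
    exists_ne_of_two_le_sum (S := G.verts) (f := fun u => G.edges s(w, u)) (fun _ => hs _) h2.ge
  have hsupp : ∀ z, G.edges s(w, z) ≠ 0 → z ∈ G.verts.erase w := fun z hz =>
    Finset.mem_erase.mpr ⟨(ne_of_edges_ne_zero hz).symm, mem_verts_of_edges_ne_zero' hz⟩
  refine ⟨{ verts := G.verts.erase w
            edges := fun e =>
              if e = s(a, b) then G.edges s(a, b) + 1 else if w ∈ e then 0 else G.edges e
            loopless := fun p => ?_
            edge_support := fun p q hpq => ?_ },
    Or.inr ⟨a, b, hab, ha, hb, h2, rfl, fun _ => rfl⟩⟩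
  · rw [if_neg, G.loopless]
    · simp
    · intro hp
      rcases Sym2.eq_iff.mp hp with ⟨rfl, rfl⟩ | ⟨rfl, rfl⟩ <;> exact hab rfl
  · split_ifs at hpq with h1 h2
    · rcases Sym2.eq_iff.mp h1 with ⟨rfl, -⟩ | ⟨rfl, -⟩
      exacts [hsupp p ha, hsupp p hb]
    · exact absurd rfl hpq
    · exact Finset.mem_erase.mpr
        ⟨fun hp => h2 (hp ▸ Sym2.mem_mk_left p q), G.edge_support p q hpq⟩

namespace MaybeSuppressed

lemma acyclic (h : MaybeSuppressed G w G') (hac : G.Acyclic) : G'.Acyclic := by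
  rcases h with ⟨-, rfl⟩ | h
  exacts [hac, h.acyclic hac]

lemma verts_subset (h : MaybeSuppressed G w G') : G'.verts ⊆ G.verts := by
  rcases h with ⟨-, rfl⟩ | ⟨_, _, -, -, -, -, hV, -⟩
  · exact subset_rfl
  · exact hV ▸ Finset.erase_subset _ _

lemma degree_eq_of_mem (h : MaybeSuppressed G w G') (hv : v ∈ G'.verts) :
    G'.degree v = G.degree v := by
  rcases h with ⟨-, rfl⟩ | h
  · rfl
  · obtain ⟨_, _, -, -, -, -, hV, -⟩ := id h
    exact h.degree_eq (Finset.ne_of_mem_erase (hV ▸ hv))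

lemma degree_ne_two_of_mem (h : MaybeSuppressed G w G') (hw : w ∈ G'.verts) :
    G.degree w ≠ 2 := by
  rcases h with ⟨h2, -⟩ | ⟨_, _, -, -, -, -, hV, -⟩
  · exact h2
  · exact absurd (hV ▸ hw) (Finset.notMem_erase w _)

lemma mem_verts (h : MaybeSuppressed G w G') (hv : v ∈ G.verts) (h2 : G.degree v ≠ 2) :
    v ∈ G'.verts := by
  rcases h with ⟨-, rfl⟩ | ⟨_, _, -, -, -, hw2, hV, -⟩
  · exact hv
  · exact hV ▸ Finset.mem_erase.mpr ⟨by rintro rfl; exact h2 hw2, hv⟩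

end MaybeSuppressed

namespace IsForest

lemma mem_erase_iff (hG : G.IsForest Y) :
    v ∈ Y.erase x ↔ v ∈ Y ∧ v ∈ G.verts.erase x := by
  simp only [Finset.mem_erase]
  exact ⟨fun h => ⟨h.2, h.1, hG.mem_verts h.2⟩, fun h => ⟨h.2.1, h.1⟩⟩

lemma degree_eq_or_of_deletedEdge (hG : G.IsForest Y) (hdel : DeletedEdge G x u G₁)
    (hx : G.degree x = 1) (hv : v ∈ G.verts) (hu : v = u → G₁.degree u ≠ 2) :
    G₁.degree v = G.degree v ∨ G.degree v = 1 ∧ G₁.degree v = 0 := by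
  by_cases hvx : v = x
  · subst hvx
    have := hdel.degree_add_one
    omega
  by_cases hvu : v = u
  · subst hvu
    have := hdel.symm.degree_add_one
    have := hu rfl
    rcases hG.2.2.2 v hv with h | h <;> omega
  · exact Or.inl (hdel.degree_of_ne hvx hvu)

/-- `H` is `G₁`, possibly with the isolated vertex `x` removed. -/
lemma of_pruned (hG : G.IsForest Y) (hx : G.degree x = 1) (hdel : DeletedEdge G x u G₁)
    (hHac : H.Acyclic) (hHV : H.verts ⊆ G.verts)
    (hHdeg : ∀ v ∈ H.verts, H.degree v = G₁.degree v) (hsup : MaybeSuppressed H u G')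
    (hY' : ∀ v, v ∈ Y' ↔ v ∈ Y ∧ v ∈ H.verts) : G'.IsForest Y' := by
  refine hG.of_degree (hsup.acyclic hHac) (hsup.verts_subset.trans hHV) (fun v hv => ?_)
    fun v => ?_
  · have hvH := hsup.verts_subset hv
    rw [hsup.degree_eq_of_mem hv, hHdeg v hvH]
    refine hG.degree_eq_or_of_deletedEdge hdel hx (hHV hvH) ?_
    rintro rfl
    rw [← hHdeg v hvH]
    exact hsup.degree_ne_two_of_mem hv
  · rw [hY']
    refine ⟨fun ⟨hvY, hvH⟩ => ⟨hvY, hsup.mem_verts hvH ?_⟩, fun ⟨hvY, hv⟩ =>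
      ⟨hvY, hsup.verts_subset hv⟩⟩
    have := hdel.degree_le v
    have := hG.degree_le_one hvY
    rw [hHdeg v hvH]
    omega

lemma exists_removedPendant (hG : G.IsForest Y) (hx : G.degree x = 1) :
    ∃ G', RemovedPendant G x G' ∧ G'.IsForest Y ∧ G'.degreeSum < G.degreeSum := by
  obtain ⟨u, hxu⟩ := exists_edges_ne_zero_of_degree_ne_zero (G := G) (v := x) (by omega)
  obtain ⟨G₁, hdel⟩ := exists_deletedEdge hxu
  have hac₁ := hdel.acyclic hG.2.1
  obtain ⟨G', hsup⟩ := exists_maybeSuppressed hac₁.isSimple u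
  have hx₁ : G₁.degree x = 0 := by
    have := hdel.degree_add_one
    omega
  have hG' : G'.IsForest Y := hG.of_pruned hx hdel hac₁ hdel.2.1.le (fun _ _ => rfl) hsup
    fun v => ⟨fun hv => ⟨hv, hdel.2.1 ▸ hG.mem_verts hv⟩, And.left⟩
  refine ⟨G', ⟨u, hx, hxu, G₁, G₁, hdel, Or.inl ⟨by omega, rfl⟩, hsup⟩, hG', ?_⟩
  have hxG' : x ∈ G'.verts :=
    hG'.mem_verts (hG.isLeaf_iff.mp ⟨mem_verts_of_edges_ne_zero hxu, hx.le⟩)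
  calc G'.degreeSum = ∑ v ∈ G'.verts, G₁.degree v :=
        Finset.sum_congr rfl fun v hv => hsup.degree_eq_of_mem hv
    _ < ∑ v ∈ G'.verts, G.degree v :=
        Finset.sum_lt_sum (fun v _ => hdel.degree_le v) ⟨x, hxG', by omega⟩
    _ ≤ G.degreeSum := Finset.sum_le_sum_of_subset (hsup.verts_subset.trans hdel.2.1.le)

lemma exists_removedLeaf (hG : G.IsForest Y) (hx : x ∈ Y) :
    ∃ G', RemovedLeaf G x G' ∧ G'.IsForest (Y.erase x) := by
  have hxV := hG.mem_verts hx
  rcases Nat.le_one_iff_eq_zero_or_eq_one.mp (hG.degree_le_one hx) with h0 | h1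
  · obtain ⟨G', hrem⟩ := exists_removedIsolated ⟨hxV, h0⟩
    refine ⟨G', Or.inl hrem, hG.of_degree (hrem.acyclic hG.2.1)
      (hrem.2.1 ▸ Finset.erase_subset _ _) (fun v _ => Or.inl (hrem.degree_eq v)) fun v => ?_⟩
    rw [hrem.2.1]
    exact hG.mem_erase_iff
  · obtain ⟨u, hxu⟩ := exists_edges_ne_zero_of_degree_ne_zero (G := G) (v := x) (by omega)
    obtain ⟨G₁, hdel⟩ := exists_deletedEdge hxu
    have hac₁ := hdel.acyclic hG.2.1
    have hx₁ : G₁.degree x = 0 := by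
      have := hdel.degree_add_one
      omega
    obtain ⟨G₂, hrem⟩ := exists_removedIsolated (G := G₁) ⟨hdel.2.1 ▸ hxV, hx₁⟩
    have hac₂ := hrem.acyclic hac₁
    obtain ⟨G', hsup⟩ := exists_maybeSuppressed hac₂.isSimple u
    refine ⟨G', Or.inr ⟨u, G₁, G₂, h1, hxu, hdel, hrem, hsup⟩, hG.of_pruned h1 hdel hac₂
      (by rw [hrem.2.1, hdel.2.1]; exact Finset.erase_subset _ _) (fun v _ => hrem.degree_eq v)
      hsup fun v => ?_⟩
    rw [hrem.2.1, hdel.2.1]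
    exact hG.mem_erase_iff

end IsForest

lemma CaseC2.eq_or_eq (h : CaseC2 F F' Fn Fn' x) : Fn = F ∨ Fn' = F' := by
  rcases h with ⟨_, -, h⟩ | ⟨_, -, h⟩ <;>
    rcases h with ⟨_, -, -, h, -⟩ | ⟨-, -, -, ⟨h, -⟩ | ⟨h, -⟩⟩ | ⟨-, -, -, -, -, h, -⟩ <;> tauto

lemma c2half_of_isCherry (hxy : F.IsCherry x y) (hnot : ¬ F'.IsCherry x y)
    (hx : ¬ F'.IsIsolated x) (hy : ¬ F'.IsIsolated y)
    (hxy' : F'.InACherry x ∨ ¬ F'.InACherry y) (hrem : RemovedPendant F x Fn) :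
    C2half F F' Fn F' x := by
  refine ⟨y, hxy, ?_⟩
  by_cases hcx : F'.InACherry x
  · obtain ⟨z, hz⟩ := hcx
    exact Or.inl ⟨z, by rintro rfl; exact hnot hz, hz, rfl, Or.inl hrem⟩
  have hcy := hxy'.resolve_left hcx
  by_cases hreach : F'.Reach x y
  · exact Or.inr (Or.inl ⟨hreach, hcx, hcy, Or.inl ⟨rfl, Or.inl hrem⟩⟩)
  · exact Or.inr (Or.inr ⟨hreach, hx, hy, hcx, hcy, rfl, Or.inl hrem⟩)

lemma RemovedLeaf.ne (h : RemovedLeaf G x G') : G' ≠ G := by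
  rintro rfl
  rcases h with ⟨hiso, hV, -⟩ | ⟨u, G₁, G₂, -, hxu, -, hrem, hsup⟩
  · exact Finset.notMem_erase x _ (hV ▸ hiso.1)
  · exact Finset.notMem_erase x _
      (hrem.2.1 ▸ hsup.verts_subset (mem_verts_of_edges_ne_zero hxu))

lemma CaseC1.cpStep (h : CaseC1 F F' Fn Fn' x) : CPStep F F' Fn Fn' x := by
  obtain ⟨y, hF, hF', hrem, hrem'⟩ := h
  refine Or.inl ⟨⟨y, hF, hF', hrem, hrem'⟩, fun h2 => ?_, fun ⟨hiso, _⟩ => ?_⟩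
  · rcases h2.eq_or_eq with h | h
    exacts [hrem.ne h, hrem'.ne h]
  · rcases hiso with h | h
    exacts [hF.not_isIsolated h, hF'.not_isIsolated h]

lemma CaseC3.cpStep (h : CaseC3 F F' Fn Fn' x) : CPStep F F' Fn Fn' x := by
  obtain ⟨hiso, hrem, hrem'⟩ := h
  refine Or.inr (Or.inr ⟨fun ⟨_, hF, hF', _⟩ => ?_, fun h2 => ?_, hiso, hrem, hrem'⟩)
  · rcases hiso with h | h
    exacts [hF.not_isIsolated h, hF'.not_isIsolated h]
  · rcases h2.eq_or_eq with h | h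
    exacts [hrem.ne h, hrem'.ne h]

lemma CaseC2.cpStep (h : CaseC2 F F' Fn F' x) : CPStep F F' Fn F' x :=
  Or.inr (Or.inl
    ⟨fun ⟨_, _, _, _, hrem'⟩ => hrem'.ne rfl, h, fun ⟨_, _, hrem'⟩ => hrem'.ne rfl⟩)

namespace IsForest

lemma exists_cpStep_of_removable (hG : G.IsForest Y) (hG' : G'.IsForest Y) (hx : x ∈ Y)
    (hcase : (G.IsIsolated x ∨ G'.IsIsolated x) ∨ ∃ y, G.IsCherry x y ∧ G'.IsCherry x y) :
    ∃ Fn Fn', CPStep G G' Fn Fn' x ∧ Fn.IsForest (Y.erase x) ∧ Fn'.IsForest (Y.erase x) := by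
  obtain ⟨Fn, hrem, hFn⟩ := hG.exists_removedLeaf hx
  obtain ⟨Fn', hrem', hFn'⟩ := hG'.exists_removedLeaf hx
  refine ⟨Fn, Fn', ?_, hFn, hFn'⟩
  rcases hcase with hiso | ⟨y, hxy, hxy'⟩
  exacts [CaseC3.cpStep ⟨hiso, hrem, hrem'⟩, CaseC1.cpStep ⟨y, hxy, hxy', hrem, hrem'⟩]

lemma exists_cpStep_of_not_isCherry (hG : G.IsForest Y) (hx : x ∈ Y) (hy : y ∈ Y)
    (hxy : G.IsCherry x y) (hxy' : ¬ G'.IsCherry x y) (hx' : ¬ G'.IsIsolated x)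
    (hy' : ¬ G'.IsIsolated y) :
    ∃ z ∈ Y, ∃ Fn, CPStep G G' Fn G' z ∧ Fn.IsForest Y ∧ Fn.degreeSum < G.degreeSum := by
  -- (C2)(a) needs the picked leaf in a cherry of `G'`, (b) and (c) need neither leaf in one
  wlog hc : G'.InACherry x ∨ ¬ G'.InACherry y generalizing x y
  · exact this hy hx hxy.symm (fun h => hxy' h.symm) hy' hx'
      (Or.inl (not_not.mp (not_or.mp hc).2))
  obtain ⟨Fn, hrem, hFn, hlt⟩ := hG.exists_removedPendant hxy.degree_eq_one
  exact ⟨x, hx, Fn, CaseC2.cpStep (Or.inl (c2half_of_isCherry hxy hxy' hx' hy' hc hrem)),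
    hFn, hlt⟩

lemma exists_cpStep (hG : G.IsForest Y) (hG' : G'.IsForest Y) (hY : Y.Nonempty) :
    ∃ x ∈ Y, ∃ Fn Fn', CPStep G G' Fn Fn' x ∧
      (Fn.IsForest (Y.erase x) ∧ Fn'.IsForest (Y.erase x) ∨
        Fn.IsForest Y ∧ Fn'.IsForest Y ∧
          Fn.degreeSum + Fn'.degreeSum < G.degreeSum + G'.degreeSum) := by
  by_cases hiso : ∃ x ∈ Y, G.IsIsolated x ∨ G'.IsIsolated x
  · obtain ⟨x, hx, hiso⟩ := hiso
    obtain ⟨Fn, Fn', hstep, hFn⟩ := hG.exists_cpStep_of_removable hG' hx (Or.inl hiso)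
    exact ⟨x, hx, Fn, Fn', hstep, Or.inl hFn⟩
  simp only [not_exists, not_and, not_or] at hiso
  obtain ⟨x, hx, y, hy, hxy⟩ := hG.exists_isCherry hY fun v hv => (hiso v hv).1
  by_cases hxy' : G'.IsCherry x y
  · obtain ⟨Fn, Fn', hstep, hFn⟩ :=
      hG.exists_cpStep_of_removable hG' hx (Or.inr ⟨y, hxy, hxy'⟩)
    exact ⟨x, hx, Fn, Fn', hstep, Or.inl hFn⟩
  · obtain ⟨z, hz, Fn, hstep, hFn, hlt⟩ := hG.exists_cpStep_of_not_isCherry hx hy hxy hxy'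
      (hiso x hx).2 (hiso y hy).2
    exact ⟨z, hz, Fn, G', hstep, Or.inr ⟨hFn, hG', by omega⟩⟩

end IsForest

lemma IsCPS.cons {m : ℕ} {xs : ℕ → V} {Fs Fs' : ℕ → Multigraph V}
    (h : IsCPS Y' Fn Fn' m xs Fs Fs') (hx : x ∈ Y) (hY' : Y' = Y ∨ Y' = Y.erase x)
    (hstep : CPStep G G' Fn Fn' x) :
    IsCPS Y G G' (m + 1) (fun | 0 => x | i + 1 => xs i) (fun | 0 => G | i + 1 => Fs i)
      (fun | 0 => G' | i + 1 => Fs' i) := by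
  obtain ⟨hm, hcard, hmem, rfl, rfl, hlast, hlast', hsteps⟩ := h
  obtain ⟨k, rfl⟩ : ∃ k, m = k + 1 := ⟨m - 1, by omega⟩
  refine ⟨by omega, ?_, fun i hi => ?_, rfl, rfl, hlast, hlast', fun i hi => ?_⟩
  · have := Finset.card_erase_add_one hx
    rcases hY' with rfl | rfl <;> omega
  · rcases i with _ | i
    · exact hx
    · rcases hY' with rfl | rfl
      exacts [hmem i (by omega), Finset.mem_of_mem_erase (hmem i (by omega))]
  · rcases i with _ | i
    · exact hstep
    · exact hsteps i (by omega)

lemma isCPS_singleton (hG : G.IsForest {x}) (hG' : G'.IsForest {x}) :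
    IsCPS {x} G G' 1 (fun _ => x) (fun _ => G) (fun _ => G') :=
  ⟨le_rfl, by simp, fun _ _ => Finset.mem_singleton_self x, rfl, rfl,
    hG.isSingleVertexGraph, hG'.isSingleVertexGraph, fun _ hi => absurd hi (by omega)⟩

theorem IsForest.exists_isCPS {Y : Finset V} {G G' : Multigraph V} (hG : G.IsForest Y)
    (hG' : G'.IsForest Y) (hY : Y.Nonempty) :
    ∃ m xs Fs Fs', IsCPS Y G G' m xs Fs Fs' := by
  obtain ⟨x, rfl⟩ | hY₂ := hY.exists_eq_singleton_or_nontrivial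
  · exact ⟨_, _, _, _, isCPS_singleton hG hG'⟩
  obtain ⟨x, hx, Fn, Fn', hstep, ⟨hFn, hFn'⟩ | ⟨hFn, hFn', hlt⟩⟩ :=
    hG.exists_cpStep hG' hY
  · obtain ⟨m, xs, Fs, Fs', h⟩ := hFn.exists_isCPS hFn' hY₂.erase_nonempty
    exact ⟨_, _, _, _, h.cons hx (Or.inr rfl) hstep⟩
  · obtain ⟨m, xs, Fs, Fs', h⟩ := hFn.exists_isCPS hFn' hY
    exact ⟨_, _, _, _, h.cons hx (Or.inl rfl) hstep⟩
termination_by (Y.card, G.degreeSum + G'.degreeSum)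
decreasing_by
  · exact Prod.Lex.left _ _ (Finset.card_erase_lt_of_mem hx)
  · exact Prod.Lex.right _ hlt

end Multigraph

open Multigraph in
theorem cps_exists_general {V : Type*} [DecidableEq V]
    (X : Finset V) (hX : X.Nonempty) (F F' : Multigraph V)
    (hF : F.IsForest X) (hF' : F'.IsForest X) :
    ∃ (m : ℕ) (xs : ℕ → V) (Fs Fs' : ℕ → Multigraph V),
      X.card ≤ m ∧ IsCPS X F F' m xs Fs Fs' := by
  obtain ⟨m, xs, Fs, Fs', h⟩ := hF.exists_isCPS hF' hX
  exact ⟨m, xs, Fs, Fs', h.2.1, h⟩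

open Multigraph in
/-- Proposition 3.2: for any two forests `F`, `F'` on `X`, there exists
a cherry picking sequence for `F` and `F'` of length `m` for some `m ≥ |X|`. -/
theorem cps_exists {V : Type*} [DecidableEq V] [Infinite V]
    (X : Finset V) (hX : X.Nonempty) (F F' : Multigraph V)
    (hF : F.IsForest X) (hF' : F'.IsForest X) :
    ∃ (m : ℕ) (xs : ℕ → V) (Fs Fs' : ℕ → Multigraph V),
      X.card ≤ m ∧ IsCPS X F F' m xs Fs Fs' :=
  cps_exists_general X hX F F' hF hF'
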